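/- arXiv:1310.8320 — 5 statements merged into one kernel-verified Lean document; each statement's English description precedes it below -/
import Mathlib

section
/- Suppose (θ₁ - 1/λ₁)ᵀ(θ₂ - θ₁) ≥ 0 and (θ₂ - 1/λ₂)ᵀ(θ₂ - θ₁) ≤ 0. Then for every t ≥ 0, θ₂ lies in the ball B_t = {x : ‖x - c_t‖₂ ≤ l_t}, where c_t = (1/2)(tθ₁ - t·(1/λ₁)1 + (1/λ₂)1 + θ₁) and l_t = (1/2)‖tθ₁ - t·(1/λ₁)1 + (1/λ₂)1 - θ₁‖₂. -/
/-!
Adding `t ≥ 0` times the first variational inequality to the second gives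
`⟪θ₂ - u, θ₂ - θ₁⟫ ≤ 0` with `u = t (θ₁ - (1/λ₁)1) + (1/λ₂)1`, i.e. the angle at `θ₂` subtended
by `θ₁` and `u` is not acute. By Thales, `θ₂` then lies in the ball with diameter `[θ₁, u]`,
which is `B_t`.
-/

open RealInnerProductSpace

section Thales

variable {E : Type*} [NormedAddCommGroup E] [InnerProductSpace ℝ E]

theorem norm_add_le_norm_sub_of_inner_nonpos {a b : E} (h : ⟪a, b⟫ ≤ 0) :
    ‖a + b‖ ≤ ‖a - b‖ := by
  have hsq : ‖a + b‖ ^ 2 ≤ ‖a - b‖ ^ 2 := by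
    rw [norm_add_sq_real, norm_sub_sq_real]
    linarith
  exact (pow_le_pow_iff_left₀ (norm_nonneg _) (norm_nonneg _) two_ne_zero).mp hsq

theorem norm_sub_midpoint_le_of_inner_nonpos {x u v : E} (h : ⟪x - u, x - v⟫ ≤ 0) :
    ‖x - (1/2 : ℝ) • (u + v)‖ ≤ (1/2) * ‖u - v‖ := by
  have hx : x - (1/2 : ℝ) • (u + v) = (1/2 : ℝ) • ((x - u) + (x - v)) := by module
  have huv : u - v = (x - v) - (x - u) := by abel
  calc ‖x - (1/2 : ℝ) • (u + v)‖ = (1/2) * ‖(x - u) + (x - v)‖ := by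
        rw [hx, norm_smul]; norm_num
    _ = (1/2) * ‖(x - v) + (x - u)‖ := by rw [add_comm]
    _ ≤ (1/2) * ‖(x - v) - (x - u)‖ := by
        gcongr
        exact norm_add_le_norm_sub_of_inner_nonpos (by rwa [real_inner_comm])
    _ = (1/2) * ‖u - v‖ := by rw [huv]

end Thales

theorem inner_sub_smul_add_sub_nonpos {E : Type*} [NormedAddCommGroup E] [InnerProductSpace ℝ E]
    {θ₁ θ₂ p₁ p₂ : E} {t : ℝ} (ht : 0 ≤ t)
    (h₁ : 0 ≤ ⟪θ₁ - p₁, θ₂ - θ₁⟫) (h₂ : ⟪θ₂ - p₂, θ₂ - θ₁⟫ ≤ 0) :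
    ⟪θ₂ - (t • (θ₁ - p₁) + p₂), θ₂ - θ₁⟫ ≤ 0 := by
  have hsplit : θ₂ - (t • (θ₁ - p₁) + p₂) = (θ₂ - p₂) - t • (θ₁ - p₁) := by abel
  rw [hsplit, inner_sub_left, real_inner_smul_left]
  linarith [mul_nonneg ht h₁]

theorem stmt_5_general {n : ℕ} (lam₁ lam₂ : ℝ)
    (o : EuclideanSpace ℝ (Fin n))
    (θ₁ θ₂ : EuclideanSpace ℝ (Fin n))
    (h₁ : 0 ≤ ⟪θ₁ - (1/lam₁) • o, θ₂ - θ₁⟫)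
    (h₂ : ⟪θ₂ - (1/lam₂) • o, θ₂ - θ₁⟫ ≤ 0) :
    ∀ t : ℝ, 0 ≤ t →
      ‖θ₂ - (1/2 : ℝ) • (t • θ₁ - t • ((1/lam₁) • o) + (1/lam₂) • o + θ₁)‖ ≤
        (1/2) * ‖t • θ₁ - t • ((1/lam₁) • o) + (1/lam₂) • o - θ₁‖ := by
  intro t ht
  rw [← smul_sub]
  exact norm_sub_midpoint_le_of_inner_nonpos (inner_sub_smul_add_sub_nonpos ht h₁ h₂)

/-- Under the two variational inequalities, for every `t ≥ 0`, `θ₂` lies in the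
ball `B_t` with center `c_t = (1/2)(tθ₁ - t(1/λ₁)1 + (1/λ₂)1 + θ₁)` and radius
`l_t = (1/2)‖tθ₁ - t(1/λ₁)1 + (1/λ₂)1 - θ₁‖₂`. -/
theorem stmt_5 {n : ℕ} (lam₁ lam₂ : ℝ) (hlam₁ : 0 < lam₁) (hlam₂ : 0 < lam₂)
    (o : EuclideanSpace ℝ (Fin n)) (ho : ∀ i, o i = 1)
    (θ₁ θ₂ : EuclideanSpace ℝ (Fin n))
    (h₁ : 0 ≤ ⟪θ₁ - (1/lam₁) • o, θ₂ - θ₁⟫)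
    (h₂ : ⟪θ₂ - (1/lam₂) • o, θ₂ - θ₁⟫ ≤ 0) :
    ∀ t : ℝ, 0 ≤ t →
      ‖θ₂ - (1/2 : ℝ) • (t • θ₁ - t • ((1/lam₁) • o) + (1/lam₂) • o + θ₁)‖ ≤
        (1/2) * ‖t • θ₁ - t • ((1/lam₁) • o) + (1/lam₂) • o - θ₁‖ :=
  stmt_5_general lam₁ lam₂ o θ₁ θ₂ h₁ h₂
end

section
/- Let b, f, y ∈ ℝⁿ with bᵀy ≠ 0 and b not parallel to y. Consider g(ρ) = -‖b‖₂‖f + ρy‖₂ + ρ(bᵀy) for ρ ∈ ℝ. Then g is concave, and its maximum value equals -‖P_y(b)‖₂‖P_y(f)‖₂ - (fᵀy)(bᵀy)/(yᵀy), attained at ρ* = -fᵀy/(yᵀy) + sign(bᵀy)·(‖P_y(f)‖₂/‖P_y(b)‖₂)(bᵀy/(yᵀy)) where here bᵀy > 0 is assumed so the sign is +. -/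
/-!
Write `t = ρ + ⟪f, y⟫ / ‖y‖²` and `β = ⟪b, y⟫`. Pythagoras along `y` gives
`‖b‖² = ‖P_y b‖² + (β / ‖y‖)²` and `‖f + ρ y‖² = ‖P_y f‖² + (t ‖y‖)²`, so by Cauchy–Schwarz in `ℝ²`
`‖b‖ ‖f + ρ y‖ ≥ ‖P_y b‖ ‖P_y f‖ + t β`, which is the upper bound after substituting
`ρ β = t β - ⟪f, y⟫ β / ‖y‖²`. The two planar vectors are parallel exactly when
`t = (‖P_y f‖ / ‖P_y b‖) (β / ‖y‖²)`, which is `ρ*`; concavity holds because `ρ ↦ ‖f + ρ y‖` is convex.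
-/

open RealInnerProductSpace

theorem mul_add_mul_le_of_sq_eq {a₁ a₂ b₁ b₂ p q : ℝ} (hp : 0 ≤ p) (hq : 0 ≤ q)
    (hp2 : p ^ 2 = a₁ ^ 2 + a₂ ^ 2) (hq2 : q ^ 2 = b₁ ^ 2 + b₂ ^ 2) :
    a₁ * b₁ + a₂ * b₂ ≤ p * q := by
  refine (abs_le_of_sq_le_sq' ?_ (mul_nonneg hp hq)).2
  rw [mul_pow, hp2, hq2]
  nlinarith [sq_nonneg (a₁ * b₂ - a₂ * b₁)]

theorem mul_add_mul_eq_of_sq_eq {a₁ a₂ b₁ b₂ p q : ℝ} (hp : 0 ≤ p) (hq : 0 ≤ q)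
    (hp2 : p ^ 2 = a₁ ^ 2 + a₂ ^ 2) (hq2 : q ^ 2 = b₁ ^ 2 + b₂ ^ 2)
    (hpar : a₁ * b₂ = a₂ * b₁) (hnonneg : 0 ≤ a₁ * b₁ + a₂ * b₂) :
    a₁ * b₁ + a₂ * b₂ = p * q := by
  refine (sq_eq_sq₀ hnonneg (mul_nonneg hp hq)).1 ?_
  rw [mul_pow, hp2, hq2]
  linear_combination (a₂ * b₁ - a₁ * b₂) * hpar

section

variable {E : Type*} [NormedAddCommGroup E] [InnerProductSpace ℝ E]

/-- The vector rejection of `v` from `y`, written `P_y(v)` in the informal statement. -/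
noncomputable def rejection (y v : E) : E := v - (⟪v, y⟫ / ‖y‖ ^ 2) • y

variable {y : E}

theorem inner_rejection_self (hy : y ≠ 0) (v : E) : ⟪rejection y v, y⟫ = 0 := by
  have hy2 : ‖y‖ ^ 2 ≠ 0 := by positivity
  rw [rejection, inner_sub_left, real_inner_smul_left, real_inner_self_eq_norm_sq]
  field_simp
  ring

theorem norm_add_smul_sq (hy : y ≠ 0) (v : E) (ρ : ℝ) :
    ‖v + ρ • y‖ ^ 2 = ‖rejection y v‖ ^ 2 + ((ρ + ⟪v, y⟫ / ‖y‖ ^ 2) * ‖y‖) ^ 2 := by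
  have hsplit : v + ρ • y = rejection y v + (ρ + ⟪v, y⟫ / ‖y‖ ^ 2) • y := by
    rw [rejection, add_smul]
    abel
  rw [hsplit, norm_add_sq_real, real_inner_smul_right, inner_rejection_self hy, norm_smul,
    Real.norm_eq_abs, mul_pow, sq_abs]
  ring

theorem norm_sq_eq_norm_rejection_sq_add (hy : y ≠ 0) (b : E) :
    ‖b‖ ^ 2 = ‖rejection y b‖ ^ 2 + (⟪b, y⟫ / ‖y‖ ^ 2 * ‖y‖) ^ 2 := by
  simpa using norm_add_smul_sq hy b 0

theorem norm_rejection_mul_add_le (hy : y ≠ 0) (b f : E) (ρ : ℝ) :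
    ‖rejection y b‖ * ‖rejection y f‖ + (ρ + ⟪f, y⟫ / ‖y‖ ^ 2) * ⟪b, y⟫ ≤
      ‖b‖ * ‖f + ρ • y‖ := by
  have hy' : ‖y‖ ≠ 0 := norm_ne_zero_iff.2 hy
  have h := mul_add_mul_le_of_sq_eq (norm_nonneg b) (norm_nonneg (f + ρ • y))
    (norm_sq_eq_norm_rejection_sq_add hy b) (norm_add_smul_sq hy f ρ)
  convert h using 2
  field_simp

theorem norm_rejection_mul_add_eq (hy : y ≠ 0) {b : E} (hb : rejection y b ≠ 0) (f : E) {ρ : ℝ}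
    (hρ : ρ = -⟪f, y⟫ / ‖y‖ ^ 2 + ‖rejection y f‖ / ‖rejection y b‖ * (⟪b, y⟫ / ‖y‖ ^ 2)) :
    ‖rejection y b‖ * ‖rejection y f‖ + (ρ + ⟪f, y⟫ / ‖y‖ ^ 2) * ⟪b, y⟫ =
      ‖b‖ * ‖f + ρ • y‖ := by
  have hy' : ‖y‖ ≠ 0 := norm_ne_zero_iff.2 hy
  have hb' : ‖rejection y b‖ ≠ 0 := norm_ne_zero_iff.2 hb
  have ht : ρ + ⟪f, y⟫ / ‖y‖ ^ 2 = ‖rejection y f‖ / ‖rejection y b‖ * (⟪b, y⟫ / ‖y‖ ^ 2) := by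
    rw [hρ]
    ring
  -- the second product is `(‖P_y f‖ / ‖P_y b‖) (β / ‖y‖)² ≥ 0`, whatever the sign of `β`
  have h := mul_add_mul_eq_of_sq_eq (norm_nonneg b) (norm_nonneg (f + ρ • y))
    (norm_sq_eq_norm_rejection_sq_add hy b) (norm_add_smul_sq hy f ρ)
    (by rw [ht]; field_simp) (by rw [ht]; field_simp; rw [zero_mul, zero_mul]; positivity)
  rw [← h, ht]
  field_simp

theorem concaveOn_neg_mul_norm_add_smul_add_mul {c : ℝ} (hc : 0 ≤ c) (f y : E) (β : ℝ) :
    ConcaveOn ℝ Set.univ (fun ρ : ℝ => -c * ‖f + ρ • y‖ + ρ * β) := by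
  have hnorm : ConvexOn ℝ Set.univ (fun ρ : ℝ => ‖f + ρ • y‖) := by
    simpa [Function.comp_def, AffineMap.lineMap_apply, add_comm] using
      (convexOn_norm convex_univ).comp_affineMap (AffineMap.lineMap (k := ℝ) f (f + y))
  refine ((hnorm.smul hc).neg.add (((LinearMap.mul ℝ ℝ).flip β).concaveOn convex_univ)).congr ?_
  intro ρ _
  simp [mul_comm]

end

theorem stmt_12_general {n : ℕ} (b f y : EuclideanSpace ℝ (Fin n)) (hy : y ≠ 0)
    (hPb : b - (⟪b, y⟫ / ‖y‖^2) • y ≠ 0)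
    (ρs : ℝ)
    (hρs : ρs = -⟪f, y⟫ / ⟪y, y⟫ +
      (‖f - (⟪f, y⟫ / ‖y‖^2) • y‖ / ‖b - (⟪b, y⟫ / ‖y‖^2) • y‖) *
        (⟪b, y⟫ / ⟪y, y⟫)) :
    ConcaveOn ℝ Set.univ (fun ρ : ℝ => -‖b‖ * ‖f + ρ • y‖ + ρ * ⟪b, y⟫) ∧
    (∀ ρ : ℝ, -‖b‖ * ‖f + ρ • y‖ + ρ * ⟪b, y⟫ ≤
      -‖b - (⟪b, y⟫ / ‖y‖^2) • y‖ * ‖f - (⟪f, y⟫ / ‖y‖^2) • y‖ -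
        ⟪f, y⟫ * ⟪b, y⟫ / ⟪y, y⟫) ∧
    -‖b‖ * ‖f + ρs • y‖ + ρs * ⟪b, y⟫ =
      -‖b - (⟪b, y⟫ / ‖y‖^2) • y‖ * ‖f - (⟪f, y⟫ / ‖y‖^2) • y‖ -
        ⟪f, y⟫ * ⟪b, y⟫ / ⟪y, y⟫ := by
  rw [real_inner_self_eq_norm_sq] at hρs ⊢
  refine ⟨concaveOn_neg_mul_norm_add_smul_add_mul (norm_nonneg b) f y _, fun ρ => ?_, ?_⟩
  · have hle := norm_rejection_mul_add_le hy b f ρ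
    simp only [rejection] at hle
    linear_combination hle
  · have heq := norm_rejection_mul_add_eq hy hPb f hρs
    simp only [rejection] at heq
    linear_combination heq

/-- With `g(ρ) = -‖b‖₂‖f + ρy‖₂ + ρ(bᵀy)`, the function `g` is concave and its
maximum equals `-‖P_y(b)‖₂‖P_y(f)‖₂ - (fᵀy)(bᵀy)/(yᵀy)`, attained at
`ρ* = -fᵀy/(yᵀy) + (‖P_y(f)‖₂/‖P_y(b)‖₂)(bᵀy/(yᵀy))` (with `bᵀy > 0`). -/
theorem stmt_12 {n : ℕ} (b f y : EuclideanSpace ℝ (Fin n)) (hy : y ≠ 0)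
    (hby : 0 < ⟪b, y⟫)
    (hPb : b - (⟪b, y⟫ / ‖y‖^2) • y ≠ 0) (hPf : f - (⟪f, y⟫ / ‖y‖^2) • y ≠ 0)
    (ρs : ℝ)
    (hρs : ρs = -⟪f, y⟫ / ⟪y, y⟫ +
      (‖f - (⟪f, y⟫ / ‖y‖^2) • y‖ / ‖b - (⟪b, y⟫ / ‖y‖^2) • y‖) *
        (⟪b, y⟫ / ⟪y, y⟫))
    (hne : f + ρs • y ≠ 0) :
    ConcaveOn ℝ Set.univ (fun ρ : ℝ => -‖b‖ * ‖f + ρ • y‖ + ρ * ⟪b, y⟫) ∧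
    (∀ ρ : ℝ, -‖b‖ * ‖f + ρ • y‖ + ρ * ⟪b, y⟫ ≤
      -‖b - (⟪b, y⟫ / ‖y‖^2) • y‖ * ‖f - (⟪f, y⟫ / ‖y‖^2) • y‖ -
        ⟪f, y⟫ * ⟪b, y⟫ / ⟪y, y⟫) ∧
    -‖b‖ * ‖f + ρs • y‖ + ρs * ⟪b, y⟫ =
      -‖b - (⟪b, y⟫ / ‖y‖^2) • y‖ * ‖f - (⟪f, y⟫ / ‖y‖^2) • y‖ -
        ⟪f, y⟫ * ⟪b, y⟫ / ⟪y, y⟫ :=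
  stmt_12_general b f y hy hPb ρs hρs
end

section
/- Let a, b, f, y ∈ ℝⁿ with ‖a‖₂ = 1, y ≠ 0, P_y(b) ≠ 0, P_y(f) ≠ 0, bᵀy = cᵀy, and suppose P_y(a)ᵀ( P_y(b)/‖P_y(b)‖₂ - P_y(f)/‖P_y(f)‖₂ ) ≤ 0. Then the minimum of rᵀf subject to aᵀ(b + r) ≤ 0, ‖r‖₂ ≤ ‖b‖₂, and (c + r)ᵀy = 0 equals -‖P_y(b)‖₂‖P_y(f)‖₂ + P_y(b)ᵀP_y(f) - fᵀb, and is attained with the ball constraint active and the halfspace constraint inactive (Lagrange multipliers α = 0 and β = ‖P_y(f)‖₂/‖P_y(b)‖₂ > 0). -/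
/-!
Put `K = yᗮ`, `P` the orthogonal projection onto `K` and `x = b + r`. Given `bᵀy = cᵀy`, the
equality constraint says `x ∈ K`, and then `⟪r, f⟫ = ⟪x, P f⟫ - ⟪f, b⟫`. Since `b - P b ⊥ K`,
Pythagoras turns `‖x - b‖ ≤ ‖b‖` into `‖x - P b‖ ≤ ‖P b‖`, so by Cauchy–Schwarz the minimum over
the ball is attained at `x = P b - (‖P b‖ / ‖P f‖) • P f`. The hypothesis on `a` says exactly that
this point satisfies the halfspace constraint, and `f + β r` lies in `Kᗮ = ℝ ∙ y`.
-/

open RealInnerProductSpace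

variable {E : Type*} [NormedAddCommGroup E] [InnerProductSpace ℝ E]

lemma inner_sub_mul_norm_le_of_norm_sub_le {u w x : E} {ρ : ℝ} (h : ‖x - u‖ ≤ ρ) :
    ⟪u, w⟫ - ρ * ‖w‖ ≤ ⟪x, w⟫ := by
  have hcs : -(‖x - u‖ * ‖w‖) ≤ ⟪x - u, w⟫ := neg_le_of_abs_le (abs_real_inner_le_norm _ _)
  have hρ : ‖x - u‖ * ‖w‖ ≤ ρ * ‖w‖ := mul_le_mul_of_nonneg_right h (norm_nonneg w)
  rw [inner_sub_left] at hcs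
  linarith

lemma inner_sub_div_norm_smul_self (u w : E) (ρ : ℝ) :
    ⟪u - (ρ / ‖w‖) • w, w⟫ = ⟪u, w⟫ - ρ * ‖w‖ := by
  rw [inner_sub_left, real_inner_smul_left, real_inner_self_eq_norm_sq]
  field_simp

lemma Submodule.starProjection_orthogonal_singleton (y v : E) :
    (ℝ ∙ y)ᗮ.starProjection v = v - (⟪v, y⟫ / ‖y‖ ^ 2) • y := by
  rw [starProjection_orthogonal_val, starProjection_singleton, real_inner_comm]
  rfl

namespace Submodule

variable (K : Submodule ℝ E) [K.HasOrthogonalProjection]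

lemma inner_starProjection_right_of_mem {x : E} (hx : x ∈ K) (v : E) :
    ⟪x, K.starProjection v⟫ = ⟪x, v⟫ := by
  rw [← inner_starProjection_left_eq_right, starProjection_eq_self_iff.mpr hx]

lemma norm_sub_sq_sub_norm_sq_of_mem {x : E} (hx : x ∈ K) (b : E) :
    ‖x - b‖ ^ 2 - ‖b‖ ^ 2 = ‖x - K.starProjection b‖ ^ 2 - ‖K.starProjection b‖ ^ 2 := by
  have pythagoras : ∀ z ∈ K,
      ‖z - b‖ ^ 2 = ‖z - K.starProjection b‖ ^ 2 + ‖b - K.starProjection b‖ ^ 2 := by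
    intro z hz
    rw [show z - b = (z - K.starProjection b) - (b - K.starProjection b) by abel,
      sq, sq, sq, norm_sub_sq_eq_norm_sq_add_norm_sq_real]
    exact inner_right_of_mem_orthogonal (K.sub_mem hz (K.starProjection_apply_mem b))
      (K.sub_starProjection_mem_orthogonal b)
  have h0 := pythagoras 0 K.zero_mem
  rw [zero_sub, zero_sub, norm_neg, norm_neg] at h0
  rw [pythagoras x hx, h0]
  ring

end Submodule

section ConstrainedMinimizer

variable (K : Submodule ℝ E) [K.HasOrthogonalProjection] (b f : E)

/-- When `K.starProjection f ≠ 0`, the minimizer of `⟪r, f⟫` subject to `b + r ∈ K` and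
`‖r‖ ≤ ‖b‖`. -/
noncomputable def constrainedMinimizer : E :=
  K.starProjection b - (‖K.starProjection b‖ / ‖K.starProjection f‖) • K.starProjection f - b

lemma add_constrainedMinimizer :
    b + constrainedMinimizer K b f =
      K.starProjection b - (‖K.starProjection b‖ / ‖K.starProjection f‖) • K.starProjection f := by
  rw [constrainedMinimizer]
  abel

lemma add_constrainedMinimizer_mem : b + constrainedMinimizer K b f ∈ K := by
  rw [add_constrainedMinimizer]
  exact K.sub_mem (K.starProjection_apply_mem b) (K.smul_mem _ (K.starProjection_apply_mem f))

lemma norm_constrainedMinimizer (hf : K.starProjection f ≠ 0) :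
    ‖constrainedMinimizer K b f‖ = ‖b‖ := by
  have h := K.norm_sub_sq_sub_norm_sq_of_mem (add_constrainedMinimizer_mem K b f) b
  rw [add_sub_cancel_left, add_constrainedMinimizer, sub_sub_cancel_left, norm_neg, norm_smul,
    Real.norm_eq_abs, abs_of_nonneg (by positivity),
    div_mul_cancel₀ _ (norm_ne_zero_iff.mpr hf), sub_self, sub_eq_zero] at h
  exact (sq_eq_sq₀ (norm_nonneg _) (norm_nonneg _)).mp h

lemma inner_constrainedMinimizer :
    ⟪constrainedMinimizer K b f, f⟫ =
      -(‖K.starProjection b‖ * ‖K.starProjection f‖) +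
        ⟪K.starProjection b, K.starProjection f⟫ - ⟪f, b⟫ := by
  calc ⟪constrainedMinimizer K b f, f⟫
      = ⟪b + constrainedMinimizer K b f, f⟫ - ⟪f, b⟫ := by
        rw [inner_add_left, real_inner_comm f b]; ring
    _ = ⟪b + constrainedMinimizer K b f, K.starProjection f⟫ - ⟪f, b⟫ := by
        rw [K.inner_starProjection_right_of_mem (add_constrainedMinimizer_mem K b f)]
    _ = _ := by rw [add_constrainedMinimizer, inner_sub_div_norm_smul_self]; ring

lemma le_inner_of_add_mem {r : E} (hr : b + r ∈ K) (hrb : ‖r‖ ≤ ‖b‖) :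
    -(‖K.starProjection b‖ * ‖K.starProjection f‖) +
        ⟪K.starProjection b, K.starProjection f⟫ - ⟪f, b⟫ ≤ ⟪r, f⟫ := by
  have hball : ‖b + r - K.starProjection b‖ ≤ ‖K.starProjection b‖ := by
    have h := K.norm_sub_sq_sub_norm_sq_of_mem hr b
    rw [add_sub_cancel_left] at h
    rw [← sq_le_sq₀ (norm_nonneg _) (norm_nonneg _)]
    nlinarith [sq_le_sq₀ (norm_nonneg r) (norm_nonneg b) |>.mpr hrb]
  have h := inner_sub_mul_norm_le_of_norm_sub_le (w := K.starProjection f) hball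
  rw [K.inner_starProjection_right_of_mem hr, inner_add_left, real_inner_comm f b] at h
  linarith

lemma inner_add_constrainedMinimizer (hb : K.starProjection b ≠ 0) (a : E) :
    ⟪a, b + constrainedMinimizer K b f⟫ =
      ‖K.starProjection b‖ * ⟪K.starProjection a,
        ‖K.starProjection b‖⁻¹ • K.starProjection b -
          ‖K.starProjection f‖⁻¹ • K.starProjection f⟫ := by
  rw [← inner_smul_right, smul_sub, smul_smul, smul_smul,
    mul_inv_cancel₀ (norm_ne_zero_iff.mpr hb), one_smul, ← div_eq_mul_inv,
    ← add_constrainedMinimizer, K.inner_starProjection_left_eq_right,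
    K.starProjection_eq_self_iff.mpr (add_constrainedMinimizer_mem K b f)]

lemma add_smul_constrainedMinimizer_mem_orthogonal (hb : K.starProjection b ≠ 0)
    (hf : K.starProjection f ≠ 0) :
    f + (‖K.starProjection f‖ / ‖K.starProjection b‖) • constrainedMinimizer K b f ∈ Kᗮ := by
  have h : f + (‖K.starProjection f‖ / ‖K.starProjection b‖) • constrainedMinimizer K b f =
      (f - K.starProjection f) -
        (‖K.starProjection f‖ / ‖K.starProjection b‖) • (b - K.starProjection b) := by
    have hβ : ‖K.starProjection f‖ / ‖K.starProjection b‖ *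
        (‖K.starProjection b‖ / ‖K.starProjection f‖) = 1 := by
      field_simp [norm_ne_zero_iff.mpr hb, norm_ne_zero_iff.mpr hf]
    rw [constrainedMinimizer, smul_sub, smul_sub, smul_smul, hβ, one_smul, smul_sub]
    abel
  rw [h]
  exact Kᗮ.sub_mem (K.sub_starProjection_mem_orthogonal f)
    (Kᗮ.smul_mem _ (K.sub_starProjection_mem_orthogonal b))

end ConstrainedMinimizer

theorem stmt_15_general {n : ℕ} (a b c f y : EuclideanSpace ℝ (Fin n))
    (hcy : ⟪b, y⟫ = ⟪c, y⟫)
    (hPb : b - (⟪b, y⟫ / ‖y‖^2) • y ≠ 0) (hPf : f - (⟪f, y⟫ / ‖y‖^2) • y ≠ 0)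
    (hcond : ⟪a - (⟪a, y⟫ / ‖y‖^2) • y,
        ‖b - (⟪b, y⟫ / ‖y‖^2) • y‖⁻¹ • (b - (⟪b, y⟫ / ‖y‖^2) • y) -
        ‖f - (⟪f, y⟫ / ‖y‖^2) • y‖⁻¹ • (f - (⟪f, y⟫ / ‖y‖^2) • y)⟫ ≤ 0) :
    IsLeast ((fun r => ⟪r, f⟫) ''
      {r : EuclideanSpace ℝ (Fin n) |
        ⟪a, b + r⟫ ≤ 0 ∧ ‖r‖ ≤ ‖b‖ ∧ ⟪c + r, y⟫ = 0})
      (-(‖b - (⟪b, y⟫ / ‖y‖^2) • y‖ * ‖f - (⟪f, y⟫ / ‖y‖^2) • y‖) +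
        ⟪b - (⟪b, y⟫ / ‖y‖^2) • y, f - (⟪f, y⟫ / ‖y‖^2) • y⟫ - ⟪f, b⟫) ∧
    (∃ r : EuclideanSpace ℝ (Fin n),
      (⟪a, b + r⟫ ≤ 0 ∧ ‖r‖ ≤ ‖b‖ ∧ ⟪c + r, y⟫ = 0) ∧
      ⟪r, f⟫ = -(‖b - (⟪b, y⟫ / ‖y‖^2) • y‖ * ‖f - (⟪f, y⟫ / ‖y‖^2) • y‖) +
        ⟪b - (⟪b, y⟫ / ‖y‖^2) • y, f - (⟪f, y⟫ / ‖y‖^2) • y⟫ - ⟪f, b⟫ ∧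
      ‖r‖ = ‖b‖ ∧
      ∃ ρ : ℝ, f + (‖f - (⟪f, y⟫ / ‖y‖^2) • y‖ / ‖b - (⟪b, y⟫ / ‖y‖^2) • y‖) • r
          + ρ • y = 0) ∧
    0 < ‖f - (⟪f, y⟫ / ‖y‖^2) • y‖ / ‖b - (⟪b, y⟫ / ‖y‖^2) • y‖ := by
  set K := (ℝ ∙ y)ᗮ
  have hc : ∀ r, ⟪c + r, y⟫ = 0 ↔ b + r ∈ K := fun r => by
    rw [Submodule.mem_orthogonal_singleton_iff_inner_left, inner_add_left, inner_add_left, hcy]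
  simp only [← Submodule.starProjection_orthogonal_singleton, hc] at hPb hPf hcond ⊢
  set r₀ := constrainedMinimizer K b f
  have hr₀ : ⟪a, b + r₀⟫ ≤ 0 ∧ ‖r₀‖ ≤ ‖b‖ ∧ b + r₀ ∈ K := by
    refine ⟨?_, (norm_constrainedMinimizer K b f hPf).le, add_constrainedMinimizer_mem K b f⟩
    rw [inner_add_constrainedMinimizer K b f hPb]
    exact mul_nonpos_of_nonneg_of_nonpos (norm_nonneg _) hcond
  obtain ⟨ρ, hρ⟩ : ∃ ρ : ℝ, ρ • y = f + (‖K.starProjection f‖ / ‖K.starProjection b‖) • r₀ := by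
    have h := add_smul_constrainedMinimizer_mem_orthogonal K b f hPb hPf
    rwa [Submodule.orthogonal_orthogonal, Submodule.mem_span_singleton] at h
  refine ⟨⟨⟨r₀, hr₀, inner_constrainedMinimizer K b f⟩, ?_⟩,
    ⟨r₀, hr₀, inner_constrainedMinimizer K b f, norm_constrainedMinimizer K b f hPf, -ρ, ?_⟩,
    div_pos (norm_pos_iff.mpr hPf) (norm_pos_iff.mpr hPb)⟩
  · rintro _ ⟨r, ⟨-, hrb, hr⟩, rfl⟩
    exact le_inner_of_add_mem K b f hr hrb
  · rw [← hρ, neg_smul, add_neg_cancel]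

/-- If `P_y(a)ᵀ(P_y(b)/‖P_y(b)‖ - P_y(f)/‖P_y(f)‖) ≤ 0`, then the minimum of
`rᵀf` subject to `aᵀ(b+r) ≤ 0`, `‖r‖ ≤ ‖b‖`, `(c+r)ᵀy = 0` equals
`-‖P_y(b)‖₂‖P_y(f)‖₂ + P_y(b)ᵀP_y(f) - fᵀb`, attained with the ball constraint
active and stationarity holding with multipliers `α = 0`,
`β = ‖P_y(f)‖₂/‖P_y(b)‖₂ > 0`. -/
theorem stmt_15 {n : ℕ} (a b c f y : EuclideanSpace ℝ (Fin n))
    (ha : ‖a‖ = 1) (hy : y ≠ 0) (hcy : ⟪b, y⟫ = ⟪c, y⟫)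
    (hPb : b - (⟪b, y⟫ / ‖y‖^2) • y ≠ 0) (hPf : f - (⟪f, y⟫ / ‖y‖^2) • y ≠ 0)
    (hcond : ⟪a - (⟪a, y⟫ / ‖y‖^2) • y,
        ‖b - (⟪b, y⟫ / ‖y‖^2) • y‖⁻¹ • (b - (⟪b, y⟫ / ‖y‖^2) • y) -
        ‖f - (⟪f, y⟫ / ‖y‖^2) • y‖⁻¹ • (f - (⟪f, y⟫ / ‖y‖^2) • y)⟫ ≤ 0)
    (hne : {r : EuclideanSpace ℝ (Fin n) |
        ⟪a, b + r⟫ ≤ 0 ∧ ‖r‖ ≤ ‖b‖ ∧ ⟪c + r, y⟫ = 0}.Nonempty) :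
    IsLeast ((fun r => ⟪r, f⟫) ''
      {r : EuclideanSpace ℝ (Fin n) |
        ⟪a, b + r⟫ ≤ 0 ∧ ‖r‖ ≤ ‖b‖ ∧ ⟪c + r, y⟫ = 0})
      (-(‖b - (⟪b, y⟫ / ‖y‖^2) • y‖ * ‖f - (⟪f, y⟫ / ‖y‖^2) • y‖) +
        ⟪b - (⟪b, y⟫ / ‖y‖^2) • y, f - (⟪f, y⟫ / ‖y‖^2) • y⟫ - ⟪f, b⟫) ∧
    (∃ r : EuclideanSpace ℝ (Fin n),
      (⟪a, b + r⟫ ≤ 0 ∧ ‖r‖ ≤ ‖b‖ ∧ ⟪c + r, y⟫ = 0) ∧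
      ⟪r, f⟫ = -(‖b - (⟪b, y⟫ / ‖y‖^2) • y‖ * ‖f - (⟪f, y⟫ / ‖y‖^2) • y‖) +
        ⟪b - (⟪b, y⟫ / ‖y‖^2) • y, f - (⟪f, y⟫ / ‖y‖^2) • y⟫ - ⟪f, b⟫ ∧
      ‖r‖ = ‖b‖ ∧
      ∃ ρ : ℝ, f + (‖f - (⟪f, y⟫ / ‖y‖^2) • y‖ / ‖b - (⟪b, y⟫ / ‖y‖^2) • y‖) • r
          + ρ • y = 0) ∧
    0 < ‖f - (⟪f, y⟫ / ‖y‖^2) • y‖ / ‖b - (⟪b, y⟫ / ‖y‖^2) • y‖ :=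
  stmt_15_general a b c f y hcy hPb hPf hcond
end

section
/- With b* = (n₊ - n₋)/n, the quantity λ_max := ‖Σᵢ max(1 - yᵢb*, 0) yᵢ xᵢ‖_∞ satisfies λ_max = ‖Σᵢ (yᵢ - (n₊ - n₋)/n) xᵢ‖_∞, and for every λ ≥ λ_max, the pair (w, b) = (0, b*) is a global minimizer of h(w,b) + λ‖w‖₁ where h(w,b) = (1/2)Σᵢ max(1 - yᵢ(wᵀxᵢ + b), 0)². -/
/-!
Since `t ↦ max t 0 ^ 2` is convex, the squared hinge loss lies above its tangent at `(0, b*)`.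
With labels `±1`, `b*` is the mean label, so `1 - yᵢ b* ≥ 0` and the gradient coefficients
`max (1 - yᵢ b*) 0 * yᵢ` are just `yᵢ - b*`, which sum to zero: the tangent has no `b`-component,
and its `w`-component `⟨w, Σᵢ (yᵢ - b*) xᵢ⟩` is dominated by `λ ‖w‖₁` as soon as `λ ≥ λ_max`
(Hölder's inequality for the `ℓ¹`/`ℓ^∞` pairing).
-/

open Finset

variable {ι κ : Type*} [Fintype ι] [Fintype κ]

theorem max_zero_sq_add_two_mul_sub_le (a c : ℝ) :
    max c 0 ^ 2 + 2 * (max c 0 * (a - c)) ≤ max a 0 ^ 2 := by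
  rcases le_total c 0 with hc | hc
  · simp [max_eq_right hc]
  · rw [max_eq_left hc]
    nlinarith [le_max_left a 0, le_max_right a 0, sq_nonneg (max a 0 - c)]

theorem max_one_sub_mul_zero_mul_eq {y b : ℝ} (hy : y = 1 ∨ y = -1) (hb : |b| ≤ 1) :
    max (1 - y * b) 0 * y = y - b := by
  rw [abs_le] at hb
  rcases hy with rfl | rfl <;> rw [max_eq_left (by linarith)] <;> ring

theorem sum_eq_card_filter_eq_one_sub_card_filter_eq_neg_one {y : ι → ℝ}
    (hy : ∀ i, y i = 1 ∨ y i = -1) :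
    ∑ i, y i = (#{i | y i = 1} : ℝ) - #{i | y i = -1} := by
  have hind : ∀ i, y i = (if y i = 1 then 1 else 0) - (if y i = -1 then 1 else 0) := fun i => by
    rcases hy i with h | h <;> simp [h] <;> norm_num
  rw [sum_congr rfl fun i _ => hind i, sum_sub_distrib, sum_boole, sum_boole]

theorem abs_sum_div_card_le_one {y : ι → ℝ} (hy : ∀ i, |y i| ≤ 1) :
    |(∑ i, y i) / Fintype.card ι| ≤ 1 := by
  rw [abs_div, Nat.abs_cast]
  refine div_le_one_of_le₀ ?_ (Nat.cast_nonneg _)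
  calc |∑ i, y i| ≤ ∑ i, |y i| := abs_sum_le_sum_abs _ _
    _ ≤ ∑ _i : ι, (1 : ℝ) := sum_le_sum fun i _ => hy i
    _ = Fintype.card ι := by simp

theorem sum_sub_sum_div_card (y : ι → ℝ) :
    ∑ i, (y i - (∑ j, y j) / Fintype.card ι) = 0 := by
  rcases isEmpty_or_nonempty ι with hι | hι
  · simp
  rw [sum_sub_distrib, sum_const, card_univ, nsmul_eq_mul,
    mul_div_cancel₀ _ (Nat.cast_ne_zero.mpr Fintype.card_ne_zero), sub_self]

theorem sum_mul_le_norm_mul_sum_abs (w v : κ → ℝ) : ∑ j, w j * v j ≤ ‖v‖ * ∑ j, |w j| := by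
  rw [mul_sum]
  refine sum_le_sum fun j _ => ?_
  calc w j * v j ≤ |w j| * |v j| := (le_abs_self _).trans (abs_mul _ _).le
    _ ≤ |w j| * ‖v‖ := mul_le_mul_of_nonneg_left (norm_le_pi_norm v j) (abs_nonneg _)
    _ = ‖v‖ * |w j| := mul_comm _ _

noncomputable def sqHingeLoss (x : ι → κ → ℝ) (y : ι → ℝ) (w : κ → ℝ) (b : ℝ) : ℝ :=
  1 / 2 * ∑ i, max (1 - y i * ((∑ j, w j * x i j) + b)) 0 ^ 2

theorem sqHingeLoss_zero_sub_le (x : ι → κ → ℝ) (y : ι → ℝ) (b₀ : ℝ) (w : κ → ℝ) (b : ℝ) :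
    sqHingeLoss x y 0 b₀ - ∑ i, max (1 - y i * b₀) 0 * y i * ((∑ j, w j * x i j) + b - b₀)
      ≤ sqHingeLoss x y w b := by
  have htangent := sum_le_sum fun i (_ : i ∈ univ) =>
    max_zero_sq_add_two_mul_sub_le (1 - y i * ((∑ j, w j * x i j) + b)) (1 - y i * b₀)
  simp only [sqHingeLoss, Pi.zero_apply, zero_mul, sum_const_zero, zero_add]
  rw [sum_add_distrib, ← mul_sum] at htangent
  have hlin : ∀ i, max (1 - y i * b₀) 0 * ((1 - y i * ((∑ j, w j * x i j) + b)) - (1 - y i * b₀))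
      = -(max (1 - y i * b₀) 0 * y i * ((∑ j, w j * x i j) + b - b₀)) := fun i => by ring
  simp only [hlin, sum_neg_distrib] at htangent
  linarith

theorem sqHingeLoss_zero_le_add_mul_sum_abs {x : ι → κ → ℝ} {y : ι → ℝ} {b₀ lam : ℝ}
    (hsum : ∑ i, max (1 - y i * b₀) 0 * y i = 0)
    (hlam : ‖∑ i, (max (1 - y i * b₀) 0 * y i) • x i‖ ≤ lam) (w : κ → ℝ) (b : ℝ) :
    sqHingeLoss x y 0 b₀ ≤ sqHingeLoss x y w b + lam * ∑ j, |w j| := by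
  set g : ι → ℝ := fun i => max (1 - y i * b₀) 0 * y i
  have hsplit : ∑ i, g i * ((∑ j, w j * x i j) + b - b₀)
      = ∑ j, w j * (∑ i, g i • x i) j + (b - b₀) * ∑ i, g i := by
    simp only [Finset.sum_apply, Pi.smul_apply, smul_eq_mul, mul_sum, add_sub_assoc, mul_add,
      sum_add_distrib]
    rw [sum_comm]
    congr 1 <;> refine sum_congr rfl fun _ _ => ?_
    · exact sum_congr rfl fun _ _ => by ring
    · ring
  have hholder : ∑ j, w j * (∑ i, g i • x i) j ≤ lam * ∑ j, |w j| :=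
    (sum_mul_le_norm_mul_sum_abs w _).trans
      (mul_le_mul_of_nonneg_right hlam (sum_nonneg fun j _ => abs_nonneg (w j)))
  have htangent := sqHingeLoss_zero_sub_le x y b₀ w b
  rw [hsplit, hsum, mul_zero, add_zero] at htangent
  linarith

theorem stmt_17_general {N m : ℕ} (x : Fin N → Fin m → ℝ) (y : Fin N → ℝ)
    (hy : ∀ i, y i = 1 ∨ y i = -1)
    (np nm : ℕ)
    (hnp : np = (Finset.univ.filter fun i => y i = 1).card)
    (hnm : nm = (Finset.univ.filter fun i => y i = -1).card)
    (bs : ℝ) (hbs : bs = ((np : ℝ) - (nm : ℝ)) / (N : ℝ))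
    (lamMax : ℝ) (hlamMax : lamMax = ‖∑ i, (max (1 - y i * bs) 0 * y i) • x i‖) :
    lamMax = ‖∑ i, (y i - ((np : ℝ) - (nm : ℝ)) / (N : ℝ)) • x i‖ ∧
    ∀ lam : ℝ, lamMax ≤ lam →
      ∀ (w : Fin m → ℝ) (b : ℝ),
        (1/2) * (∑ i, (max (1 - y i * ((∑ j, w j * x i j) + b)) 0)^2) +
            lam * ∑ j, |w j| ≥
        (1/2) * (∑ i, (max (1 - y i * ((∑ j : Fin m, (0:ℝ) * x i j) + bs)) 0)^2) +
            lam * ∑ _j : Fin m, |(0:ℝ)| := by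
  have hmean : bs = (∑ i, y i) / Fintype.card (Fin N) := by
    rw [hbs, sum_eq_card_filter_eq_one_sub_card_filter_eq_neg_one hy, hnp, hnm, Fintype.card_fin]
  have hbs_abs : |bs| ≤ 1 :=
    hmean ▸ abs_sum_div_card_le_one fun i => by rcases hy i with h | h <;> simp [h]
  have hcoef : ∀ i, max (1 - y i * bs) 0 * y i = y i - bs :=
    fun i => max_one_sub_mul_zero_mul_eq (hy i) hbs_abs
  refine ⟨by rw [hlamMax, ← hbs]; simp only [hcoef], fun lam hlam w b => ?_⟩
  have hsum : ∑ i, max (1 - y i * bs) 0 * y i = 0 := by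
    simp only [hcoef]
    rw [hmean]
    exact sum_sub_sum_div_card y
  have hopt := sqHingeLoss_zero_le_add_mul_sum_abs hsum (hlamMax ▸ hlam) w b
  simpa [sqHingeLoss] using hopt

/-- With `b* = (n₊ - n₋)/n`, the quantity
`λ_max = ‖Σᵢ max(1 - yᵢb*, 0) yᵢ xᵢ‖_∞` equals
`‖Σᵢ (yᵢ - (n₊ - n₋)/n) xᵢ‖_∞`, and for every `λ ≥ λ_max`, the pair `(0, b*)`
globally minimizes `h(w,b) + λ‖w‖₁` with
`h(w,b) = (1/2)Σᵢ max(1 - yᵢ(wᵀxᵢ + b), 0)²`.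
(Here `Fin m → ℝ` carries the sup norm `‖·‖_∞`.) -/
theorem stmt_17 {N m : ℕ} (x : Fin N → Fin m → ℝ) (y : Fin N → ℝ)
    (hy : ∀ i, y i = 1 ∨ y i = -1)
    (np nm : ℕ)
    (hnp : np = (Finset.univ.filter fun i => y i = 1).card)
    (hnm : nm = (Finset.univ.filter fun i => y i = -1).card)
    (hnp0 : 0 < np) (hnm0 : 0 < nm)
    (bs : ℝ) (hbs : bs = ((np : ℝ) - (nm : ℝ)) / (N : ℝ))
    (lamMax : ℝ) (hlamMax : lamMax = ‖∑ i, (max (1 - y i * bs) 0 * y i) • x i‖) :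
    lamMax = ‖∑ i, (y i - ((np : ℝ) - (nm : ℝ)) / (N : ℝ)) • x i‖ ∧
    ∀ lam : ℝ, lamMax ≤ lam →
      ∀ (w : Fin m → ℝ) (b : ℝ),
        (1/2) * (∑ i, (max (1 - y i * ((∑ j, w j * x i j) + b)) 0)^2) +
            lam * ∑ j, |w j| ≥
        (1/2) * (∑ i, (max (1 - y i * ((∑ j : Fin m, (0:ℝ) * x i j) + bs)) 0)^2) +
            lam * ∑ _j : Fin m, |(0:ℝ)| :=
  stmt_17_general x y hy np nm hnp hnm bs hbs lamMax hlamMax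
end

section
/- Let (w*, b*, ξ*) be optimal for the primal L1-regularized L2-loss SVM min (1/2)Σᵢξᵢ² + λ‖w‖₁ subject to yᵢ(wᵀxᵢ + b) ≥ 1 - ξᵢ, ξᵢ ≥ 0, and let α* be the corresponding optimal dual variables. Then ξᵢ* = αᵢ* = max(0, 1 - yᵢ((w*)ᵀxᵢ + b*)) for all i, and for every feature j, if wⱼ* ≠ 0 then (α*)ᵀ(Y fⱼ) = sign(wⱼ*)·λ, while if wⱼ* = 0 then |(α*)ᵀ(Y fⱼ)| ≤ λ, where fⱼ ∈ ℝⁿ is the j-th feature (row of the data matrix) and Y = diag(y). -/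
/-!
Both parts come from perturbing the optimum. Replacing the slacks by the hinge values
`max 0 (1 - yᵢ(wᵀxᵢ + b))` keeps feasibility and can only lower each slack, so optimality
forces equality. Moving `wⱼ` by `t` and the slacks to `max 0 (ξᵢ - t yᵢ Xⱼᵢ)` also keeps
feasibility, and the loss grows by at most `-t ⟨ξ, Y fⱼ⟩ + O(t²)`; hence
`t ⟨ξ, Y fⱼ⟩ ≤ λ (|wⱼ + t| - |wⱼ|) + O(t²)` for all `t`, and letting `t → 0` from
either side gives the subgradient condition `⟨α, Y fⱼ⟩ ∈ λ ∂|·|(wⱼ)`.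
-/

open Filter Topology

section ScalarFirstOrder

variable {a b w lam C : ℝ}

theorem le_of_eventually_mul_le_mul_add_sq
    (h : ∀ᶠ t in 𝓝[>] (0 : ℝ), t * a ≤ t * b + t ^ 2 * C) : a ≤ b := by
  have hlim : Tendsto (fun t => b + t * C) (𝓝[>] 0) (𝓝 b) := by
    have : Tendsto (fun t : ℝ => b + t * C) (𝓝 0) (𝓝 (b + 0 * C)) :=
      tendsto_const_nhds.add (tendsto_id.mul_const C)
    simpa using this.mono_left nhdsWithin_le_nhds
  refine ge_of_tendsto hlim ?_
  filter_upwards [h, self_mem_nhdsWithin] with t ht (htpos : 0 < t)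
  exact le_of_mul_le_mul_left (by linarith) htpos

theorem eq_of_forall_mul_le_abs_add_sub_abs_of_pos (hw : 0 < w)
    (h : ∀ t, t * a ≤ lam * (|w + t| - |w|) + t ^ 2 * C) : a = lam := by
  apply le_antisymm <;> apply le_of_eventually_mul_le_mul_add_sq (C := C) <;>
    filter_upwards [Ioo_mem_nhdsGT hw] with t ⟨ht0, htw⟩
  · have := h t
    rw [abs_of_pos (by linarith : 0 < w + t), abs_of_pos hw] at this
    linarith
  · have := h (-t)
    rw [abs_of_pos (by linarith : 0 < w + -t), abs_of_pos hw, neg_sq] at this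
    linarith

theorem eq_sign_mul_of_forall_mul_le_abs_add_sub_abs (hw : w ≠ 0)
    (h : ∀ t, t * a ≤ lam * (|w + t| - |w|) + t ^ 2 * C) : a = Real.sign w * lam := by
  rcases hw.lt_or_gt with hneg | hpos
  · have hflip : -a = lam := by
      refine eq_of_forall_mul_le_abs_add_sub_abs_of_pos (neg_pos.2 hneg) (C := C) fun t => ?_
      have := h (-t)
      rw [show w + -t = -(-w + t) by ring, abs_neg, neg_sq] at this
      rw [abs_neg]
      linarith
    rw [Real.sign_of_neg hneg]
    linarith
  · rw [Real.sign_of_pos hpos, one_mul]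
    exact eq_of_forall_mul_le_abs_add_sub_abs_of_pos hpos h

theorem abs_le_of_forall_mul_le_abs_add_sub_abs (hw : w = 0)
    (h : ∀ t, t * a ≤ lam * (|w + t| - |w|) + t ^ 2 * C) : |a| ≤ lam := by
  simp only [hw, zero_add, abs_zero, sub_zero] at h
  refine abs_le.2 ⟨neg_le.1 ?_, ?_⟩ <;>
    apply le_of_eventually_mul_le_mul_add_sq (C := C) <;>
    filter_upwards [self_mem_nhdsWithin] with t (ht : 0 < t)
  · have := h (-t)
    rw [abs_neg, abs_of_pos ht, neg_sq] at this
    linarith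
  · have := h t
    rw [abs_of_pos ht] at this
    linarith

end ScalarFirstOrder

section SVM

variable {ι κ : Type*} [Fintype ι]
  {X : ι → κ → ℝ} {y : κ → ℝ} {lam : ℝ} {w ws : ι → ℝ} {b bs : ℝ} {ξ ξs : κ → ℝ}

variable (X y) in
def SVMFeasible (w : ι → ℝ) (b : ℝ) (ξ : κ → ℝ) : Prop :=
  ∀ i, 1 - ξ i ≤ y i * ((∑ j, w j * X j i) + b) ∧ 0 ≤ ξ i

variable (X y) in
theorem svmFeasible_hinge (w : ι → ℝ) (b : ℝ) :
    SVMFeasible X y w b fun i => max 0 (1 - y i * ((∑ j, w j * X j i) + b)) :=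
  fun i =>
    ⟨by linarith [le_max_right 0 (1 - y i * ((∑ j, w j * X j i) + b))], le_max_left _ _⟩

theorem SVMFeasible.hinge_le (h : SVMFeasible X y w b ξ) (i : κ) :
    max 0 (1 - y i * ((∑ j, w j * X j i) + b)) ≤ ξ i :=
  max_le (h i).2 (by linarith [(h i).1])

theorem sum_apply_add_single [DecidableEq ι] (f : ι → ℝ → ℝ) (w : ι → ℝ) (j : ι) (t : ℝ) :
    ∑ k, f k ((w + Pi.single j t : ι → ℝ) k) =
      ∑ k, f k (w k) + (f j (w j + t) - f j (w j)) := by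
  rw [← sub_eq_iff_eq_add', ← Finset.sum_sub_distrib, Fintype.sum_eq_single j]
  · simp
  · intro k hk
    simp [Pi.single_eq_of_ne hk]

theorem SVMFeasible.add_single [DecidableEq ι] (h : SVMFeasible X y w b ξ) (j : ι) (t : ℝ) :
    SVMFeasible X y (w + Pi.single j t) b fun i => max 0 (ξ i - t * (y i * X j i)) := by
  intro i
  have hmargin : y i * ((∑ k, (w + Pi.single j t : ι → ℝ) k * X k i) + b) =
      y i * ((∑ k, w k * X k i) + b) + t * (y i * X j i) := by
    rw [sum_apply_add_single (fun k v => v * X k i)]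
    ring
  rw [hmargin]
  exact ⟨by linarith [(h i).1, le_max_right 0 (ξ i - t * (y i * X j i))], le_max_left _ _⟩

variable [Fintype κ]

variable (lam) in
noncomputable def svmObjective (w : ι → ℝ) (ξ : κ → ℝ) : ℝ :=
  (1 / 2) * (∑ i, (ξ i) ^ 2) + lam * ∑ j, |w j|

theorem SVMFeasible.eq_hinge_of_optimal (hfeas : SVMFeasible X y ws bs ξs)
    (hopt : ∀ w b ξ, SVMFeasible X y w b ξ → svmObjective lam ws ξs ≤ svmObjective lam w ξ)
    (i : κ) :
    ξs i = max 0 (1 - y i * ((∑ j, ws j * X j i) + bs)) := by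
  set ξh : κ → ℝ := fun i => max 0 (1 - y i * ((∑ j, ws j * X j i) + bs))
  have hsq_le : ∀ i ∈ Finset.univ, ξh i ^ 2 ≤ ξs i ^ 2 := fun i _ =>
    pow_le_pow_left₀ (le_max_left _ _) (hfeas.hinge_le i) 2
  have hsum : ∑ i, ξh i ^ 2 = ∑ i, ξs i ^ 2 := by
    have := hopt ws bs ξh (svmFeasible_hinge X y ws bs)
    unfold svmObjective at this
    linarith [Finset.sum_le_sum hsq_le]
  have := (Finset.sum_eq_sum_iff_of_le hsq_le).1 hsum i (Finset.mem_univ i)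
  exact ((sq_eq_sq₀ (le_max_left _ _) (hfeas i).2).1 this).symm

theorem SVMFeasible.mul_sum_le_of_optimal [DecidableEq ι] (hfeas : SVMFeasible X y ws bs ξs)
    (hopt : ∀ w b ξ, SVMFeasible X y w b ξ → svmObjective lam ws ξs ≤ svmObjective lam w ξ)
    (j : ι) (t : ℝ) :
    t * ∑ i, ξs i * (y i * X j i) ≤
      lam * (|ws j + t| - |ws j|) + t ^ 2 * ((∑ i, (y i * X j i) ^ 2) / 2) := by
  set g : κ → ℝ := fun i => y i * X j i
  have hopt' := hopt _ _ _ (hfeas.add_single j t)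
  unfold svmObjective at hopt'
  rw [sum_apply_add_single (fun _ v => |v|)] at hopt'
  have hloss : ∑ i, max 0 (ξs i - t * g i) ^ 2 ≤ ∑ i, (ξs i - t * g i) ^ 2 :=
    Finset.sum_le_sum fun i _ => by
      rcases le_total (ξs i - t * g i) 0 with hle | hge
      · rw [max_eq_left hle, zero_pow two_ne_zero]; exact sq_nonneg _
      · rw [max_eq_right hge]
  have hexpand : ∑ i, (ξs i - t * g i) ^ 2 =
      ∑ i, ξs i ^ 2 - 2 * t * ∑ i, ξs i * g i + t ^ 2 * ∑ i, g i ^ 2 := by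
    simp only [sub_sq, Finset.sum_add_distrib, Finset.sum_sub_distrib, Finset.mul_sum]
    congr 1 <;> [congr 1; skip] <;> exact Finset.sum_congr rfl fun i _ => by ring
  linarith

end SVM

theorem stmt_18_general {m N : ℕ} (X : Fin m → Fin N → ℝ) (y : Fin N → ℝ)
    (lam : ℝ)
    (ws : Fin m → ℝ) (bs : ℝ) (ξs : Fin N → ℝ)
    (hfeas : ∀ i, 1 - ξs i ≤ y i * ((∑ j, ws j * X j i) + bs) ∧ 0 ≤ ξs i)
    (hopt : ∀ (w : Fin m → ℝ) (b : ℝ) (ξ : Fin N → ℝ),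
      (∀ i, 1 - ξ i ≤ y i * ((∑ j, w j * X j i) + b) ∧ 0 ≤ ξ i) →
      (1/2) * (∑ i, (ξs i)^2) + lam * ∑ j, |ws j| ≤
        (1/2) * (∑ i, (ξ i)^2) + lam * ∑ j, |w j|)
    (αs : Fin N → ℝ)
    (hα : ∀ i, αs i = ξs i) :
    (∀ i, ξs i = max 0 (1 - y i * ((∑ j, ws j * X j i) + bs))) ∧
    ∀ j : Fin m,
      (ws j ≠ 0 → ∑ i, αs i * y i * X j i = Real.sign (ws j) * lam) ∧
      (ws j = 0 → |∑ i, αs i * y i * X j i| ≤ lam) := by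
  refine ⟨SVMFeasible.eq_hinge_of_optimal hfeas hopt, fun j => ?_⟩
  have hvar := SVMFeasible.mul_sum_le_of_optimal hfeas hopt j
  have hsum : ∑ i, αs i * y i * X j i = ∑ i, ξs i * (y i * X j i) :=
    Finset.sum_congr rfl fun i _ => by rw [hα, mul_assoc]
  rw [hsum]
  exact ⟨fun hw => eq_sign_mul_of_forall_mul_le_abs_add_sub_abs hw hvar,
    fun hw => abs_le_of_forall_mul_le_abs_add_sub_abs hw hvar⟩

/-- KKT relations for the primal L1-regularized L2-loss SVM: if `(w*, b*, ξ*)`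
is optimal for `min (1/2)Σᵢξᵢ² + λ‖w‖₁` s.t. `yᵢ(wᵀxᵢ + b) ≥ 1 - ξᵢ, ξᵢ ≥ 0`,
then `ξᵢ* = αᵢ* = max(0, 1 - yᵢ((w*)ᵀxᵢ + b*))`, and for each feature `j`:
if `wⱼ* ≠ 0` then `(α*)ᵀ(Y fⱼ) = sign(wⱼ*)·λ`, while if `wⱼ* = 0` then
`|(α*)ᵀ(Y fⱼ)| ≤ λ`.  Here `X j i` is entry `i` of the `j`-th feature `fⱼ`,
so that `(w*)ᵀxᵢ = Σⱼ wⱼ* X j i` and `(α*)ᵀ(Y fⱼ) = Σᵢ αᵢ* yᵢ X j i`. -/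
theorem stmt_18 {m N : ℕ} (X : Fin m → Fin N → ℝ) (y : Fin N → ℝ)
    (hy : ∀ i, y i = 1 ∨ y i = -1) (lam : ℝ) (hlam : 0 < lam)
    (ws : Fin m → ℝ) (bs : ℝ) (ξs : Fin N → ℝ)
    (hfeas : ∀ i, 1 - ξs i ≤ y i * ((∑ j, ws j * X j i) + bs) ∧ 0 ≤ ξs i)
    (hopt : ∀ (w : Fin m → ℝ) (b : ℝ) (ξ : Fin N → ℝ),
      (∀ i, 1 - ξ i ≤ y i * ((∑ j, w j * X j i) + b) ∧ 0 ≤ ξ i) →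
      (1/2) * (∑ i, (ξs i)^2) + lam * ∑ j, |ws j| ≤
        (1/2) * (∑ i, (ξ i)^2) + lam * ∑ j, |w j|)
    (αs : Fin N → ℝ)
    (hα : ∀ i, αs i = ξs i) :
    (∀ i, ξs i = max 0 (1 - y i * ((∑ j, ws j * X j i) + bs))) ∧
    ∀ j : Fin m,
      (ws j ≠ 0 → ∑ i, αs i * y i * X j i = Real.sign (ws j) * lam) ∧
      (ws j = 0 → |∑ i, αs i * y i * X j i| ≤ lam) :=
  stmt_18_general X y lam ws bs ξs hfeas hopt αs hα
end
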